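/- arXiv:1708.08145 — 6 statements merged into one kernel-verified Lean document; each statement's English description precedes it below -/
import Mathlib

section
/- Let s ≥ 1 be a natural number and let p ∈ [-2s², 0]. Writing x = 1 + p/s² (so x ∈ [-1,1]), the zero-damping SK-ROCK mean-square stability bound holds: T_s(x)² + (1/s²) · U_{s-1}(x)² · (1 + p/(2s²))² · (-2p) ≤ 1. -/
open Polynomial Polynomial.Chebyshev

theorem skrock_zero_damping_stability (s : ℕ) (hs : 1 ≤ s) (p : ℝ)
    (hp : p ∈ Set.Icc (-2 * (s : ℝ) ^ 2) 0) :
    ((T ℝ s).eval (1 + p / s ^ 2)) ^ 2 +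
      (1 / (s : ℝ) ^ 2) * ((U ℝ ((s : ℤ) - 1)).eval (1 + p / s ^ 2)) ^ 2 *
        (1 + p / (2 * s ^ 2)) ^ 2 * (-2 * p) ≤ 1 := by
  obtain ⟨hp1, hp2⟩ := hp
  have hs2 : (0:ℝ) < (s:ℝ)^2 := by positivity
  set x : ℝ := 1 + p / s^2 with hx
  have hx1 : -1 ≤ x := by
    have h : -2 ≤ p / (s:ℝ)^2 := by rw [le_div_iff₀ hs2]; nlinarith
    rw [hx]; linarith
  have hx2 : x ≤ 1 := by
    rw [hx]
    have : p / s^2 ≤ 0 := div_nonpos_of_nonpos_of_nonneg hp2 hs2.le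
    linarith
  set θ := Real.arccos x with hθ
  have hcos : Real.cos θ = x := Real.cos_arccos hx1 hx2
  have hsin : Real.sin θ ^ 2 = 1 - x^2 := by
    rw [hθ, Real.sin_arccos]
    exact Real.sq_sqrt (by nlinarith)
  have hT : (T ℝ s).eval x = Real.cos (s * θ) := by
    rw [← hcos]; exact_mod_cast Polynomial.Chebyshev.T_real_cos θ s
  have hU : (U ℝ ((s:ℤ) - 1)).eval x * Real.sin θ = Real.sin (s * θ) := by
    have h := Polynomial.Chebyshev.U_real_cos θ ((s:ℤ) - 1)
    rw [hcos] at h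
    simpa using h
  have hpyth := Real.sin_sq_add_cos_sq (s*θ)
  have ha : 0 ≤ 1 + p/(2*s^2) := by
    have h : -1 ≤ p / (2*(s:ℝ)^2) := by
      rw [le_div_iff₀ (by positivity : (0:ℝ) < 2*(s:ℝ)^2)]; nlinarith
    linarith
  have ha1 : 1 + p/(2*s^2) ≤ 1 := by
    have : p / (2*s^2) ≤ 0 := div_nonpos_of_nonpos_of_nonneg hp2 (by positivity)
    linarith
  have key : (1 / (s : ℝ) ^ 2) * ((U ℝ ((s : ℤ) - 1)).eval x) ^ 2 *
      (1 + p / (2 * s ^ 2)) ^ 2 * (-2 * p)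
      = (1 + p/(2*s^2)) * Real.sin (s*θ)^2 := by
    have hs0 : (s:ℝ) ≠ 0 := by positivity
    rw [← hU, mul_pow, hsin, hx]
    field_simp
    ring
  rw [hT, key]
  nlinarith [sq_nonneg (Real.sin (s*θ)), sq_nonneg (Real.cos (s*θ))]
end

section
/- Let s ≥ 1, δ > 0, h > 0 with p := -δh ∈ [-2s², 0) and p ≠ values where A(p)² = 1, and set A(p) = T_s(1 + p/s²), B(p) = s^{-1} U_{s-1}(1 + p/s²)(1 + p/(2s²)). If |A(p)| < 1, then (2p · B(p)²)/(A(p)² - 1) - p/(2s²) = 1. -/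
set_option maxHeartbeats 1000000


open Polynomial Polynomial.Chebyshev

theorem pskrock_exact_invariant_measure (s : ℕ) (hs : 1 ≤ s) (δ h : ℝ)
    (hδ : 0 < δ) (hh : 0 < h) (p : ℝ) (hpdef : p = -δ * h)
    (hp : p ∈ Set.Ico (-2 * (s : ℝ) ^ 2) 0)
    (A B : ℝ)
    (hA : A = (T ℝ s).eval (1 + p / s ^ 2))
    (hB : B = ((s : ℝ))⁻¹ * (U ℝ ((s : ℤ) - 1)).eval (1 + p / s ^ 2) * (1 + p / (2 * s ^ 2)))
    (hAlt : |A| < 1) :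
    (2 * p * B ^ 2) / (A ^ 2 - 1) - p / (2 * s ^ 2) = 1 := by
  obtain ⟨hp1, hp2⟩ := hp
  have hs0 : (0 : ℝ) < (s : ℝ) := by exact_mod_cast hs
  have hs2 : (0 : ℝ) < (s : ℝ) ^ 2 := by positivity
  set x : ℝ := 1 + p / s ^ 2 with hxdef
  have hx1 : -1 ≤ x := by
    rw [hxdef]
    have : -2 ≤ p / (s : ℝ) ^ 2 := by rw [le_div_iff₀ hs2]; nlinarith
    linarith
  have hx2 : x ≤ 1 := by
    rw [hxdef]
    nlinarith [div_nonpos_of_nonpos_of_nonneg (le_of_lt hp2) (le_of_lt hs2)]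
  set θ : ℝ := Real.arccos x with hθ
  have hcos : Real.cos θ = x := Real.cos_arccos hx1 hx2
  have hsin : Real.sin θ ^ 2 = 1 - x ^ 2 := by
    have := Real.sin_sq_add_cos_sq θ
    rw [hcos] at this; linarith
  set u : ℝ := (U ℝ ((s : ℤ) - 1)).eval x with hu
  have hU := Polynomial.Chebyshev.U_real_cos θ ((s : ℤ) - 1)
  rw [hcos] at hU
  push_cast at hU
  have hT := Polynomial.Chebyshev.T_real_cos θ (s : ℤ)
  rw [hcos] at hT
  push_cast at hT
  have hAcos : A = Real.cos ((s : ℝ) * θ) := by rw [hA, hT]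
  have hU2 : u * Real.sin θ = Real.sin ((s : ℝ) * θ) := by
    rw [hu, hU]; congr 1; ring
  have key : (1 - x ^ 2) * u ^ 2 = 1 - A ^ 2 := by
    have h1 : (u * Real.sin θ) ^ 2 = Real.sin ((s : ℝ) * θ) ^ 2 := by rw [hU2]
    have h3 := Real.sin_sq_add_cos_sq ((s : ℝ) * θ)
    rw [hAcos]
    nlinarith [h1, h3, hsin]
  have hAne : A ^ 2 - 1 ≠ 0 := by
    have : A ^ 2 < 1 := by nlinarith [abs_nonneg A, sq_abs A, hAlt]
    linarith
  have hB2 : 2 * p * B ^ 2 = (1 + p / (2 * s ^ 2)) * (A ^ 2 - 1) := by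
    rw [hxdef] at key
    rw [hB]
    linear_combination (-(1 + p / (2 * (s : ℝ) ^ 2))) * key
  rw [hB2, mul_div_assoc, div_self hAne, mul_one]
  ring
end

section
/- For every natural number n with 1 ≤ n ≤ s, the n-th derivative of the s-th Chebyshev polynomial of the first kind evaluated at 1 equals T_s^{(n)}(1) = ∏_{k=0}^{n-1} (s² - k²)/(2k+1). -/
open Polynomial Polynomial.Chebyshev Finset

lemma cheb_ode (m : ℤ) :
    (1 - X ^ 2 : ℝ[X]) * derivative (derivative (T ℝ m)) =
      X * derivative (T ℝ m) - (m : ℝ[X]) ^ 2 * T ℝ m := by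
  have h1 := one_sub_X_sq_mul_derivative_T_eq_poly_in_T (R := ℝ) (m - 1)
  rw [show m - 1 + 1 = m by ring] at h1
  have h3 := one_sub_X_sq_mul_derivative_T_eq_poly_in_T (R := ℝ) (m - 2)
  rw [show m - 2 + 1 = m - 1 by ring] at h3
  have h4 := T_add_two ℝ (m - 2)
  rw [show m - 2 + 2 = m by ring, show m - 2 + 1 = m - 1 by ring] at h4
  have h2 := congr_arg derivative h1
  simp only [derivative_mul, derivative_sub, derivative_one, derivative_X_pow, derivative_X,
    derivative_add, derivative_intCast, map_ofNat, Nat.cast_ofNat, zero_add, add_zero, zero_mul, mul_zero, zero_sub] at h2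
  have hne : (1 - X ^ 2 : ℝ[X]) ≠ 0 := by
    intro h
    have := congr_arg (eval 0) h
    simp at this
  apply mul_left_cancel₀ hne
  rw [mul_sub]
  linear_combination (norm := (push_cast; ring_nf))
    (-((m : ℝ[X]) - 1) * X) * h1 + (1 - X ^ 2 : ℝ[X]) * h2 + (m : ℝ[X]) * h3
      + (m : ℝ[X]) * ((m : ℝ[X]) - 1) * h4

example : True := trivial

lemma cheb_eval_one (m : ℤ) : (T ℝ m).eval 1 = 1 := by
  have h := T_real_cos 0 m
  simpa using h

lemma cheb_iter_ode (m : ℤ) (n : ℕ) :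
    (1 - X ^ 2 : ℝ[X]) * derivative^[n + 2] (T ℝ m) =
      (2 * (n : ℝ[X]) + 1) * X * derivative^[n + 1] (T ℝ m)
        - ((m : ℝ[X]) ^ 2 - (n : ℝ[X]) ^ 2) * derivative^[n] (T ℝ m) := by
  induction n with
  | zero =>
    simpa [Function.iterate_succ_apply', cheb_ode m] using cheb_ode m
  | succ n ih =>
    have h2 := congr_arg derivative ih
    simp only [derivative_mul, derivative_sub, derivative_add, derivative_one, derivative_X_pow,
      derivative_X, derivative_pow, derivative_intCast, derivative_natCast, derivative_ofNat,
      map_ofNat, Nat.cast_ofNat, zero_add, add_zero, zero_mul, mul_zero, zero_sub,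
      ← Function.iterate_succ_apply' derivative] at h2 ⊢
    simp only [show (n + 1) + 1 = n + 2 from rfl, show (n + 1) + 2 = n + 3 from rfl,
      show (n + 2) + 1 = n + 3 from rfl, Nat.succ_eq_add_one] at h2 ⊢
    push_cast at h2 ⊢
    linear_combination h2

lemma cheb_eval_rec (m : ℤ) (n : ℕ) :
    (derivative^[n + 1] (T ℝ m)).eval 1 =
      ((m : ℝ) ^ 2 - (n : ℝ) ^ 2) / (2 * (n : ℝ) + 1) * (derivative^[n] (T ℝ m)).eval 1 := by
  have h := congr_arg (eval (1 : ℝ)) (cheb_iter_ode m n)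
  simp only [eval_mul, eval_sub, eval_add, eval_one, eval_pow, eval_X, eval_intCast,
    eval_natCast, eval_ofNat, one_pow, sub_self, zero_mul, mul_one] at h
  have hpos : (2 * (n : ℝ) + 1) ≠ 0 := by positivity
  rw [div_mul_eq_mul_div, eq_div_iff hpos]
  linear_combination -h

lemma cheb_prod (m : ℤ) (n : ℕ) :
    (derivative^[n] (T ℝ m)).eval 1 =
      ∏ k ∈ Finset.range n, ((m : ℝ) ^ 2 - (k : ℝ) ^ 2) / (2 * (k : ℝ) + 1) := by
  induction n with
  | zero => simp [cheb_eval_one]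
  | succ n ih => rw [cheb_eval_rec, ih, Finset.prod_range_succ]; ring

theorem chebyshev_T_iterated_derivative_at_one (s n : ℕ) (h1 : 1 ≤ n) (h2 : n ≤ s) :
    (derivative^[n] (T ℝ s)).eval 1 =
      ∏ k ∈ Finset.range n, ((s : ℝ) ^ 2 - (k : ℝ) ^ 2) / (2 * (k : ℝ) + 1) := by
  simpa using cheb_prod (s : ℤ) n
end

section
/- For every real z ≥ 0, T_s(1 + z/s²) converges to cosh(√(2z)) as s → ∞. -/
open Polynomial Polynomial.Chebyshev Filter

lemma T_real_cosh_aux (n : ℤ) (t : ℝ) :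
    (T ℝ n).eval (Real.cosh t) = Real.cosh (n * t) := by
  apply Complex.ofReal_injective
  have h := Polynomial.Chebyshev.T_complex_cos ((t : ℂ) * Complex.I) n
  rw [Complex.cos_mul_I] at h
  rw [Polynomial.Chebyshev.complex_ofReal_eval_T, Complex.ofReal_cosh, h,
    Complex.ofReal_cosh, show (n : ℂ) * ((t : ℂ) * Complex.I) = ((n * t : ℝ) : ℂ) * Complex.I by
      push_cast; ring, Complex.cos_mul_I]

theorem chebyshev_T_limit_cosh (z : ℝ) (hz : 0 ≤ z) :
    Tendsto (fun s : ℕ => (T ℝ s).eval (1 + z / (s : ℝ) ^ 2)) atTop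
      (nhds (Real.cosh (Real.sqrt (2 * z)))) := by
  set y : ℕ → ℝ := fun s => Real.sqrt ((1 + z / (s : ℝ) ^ 2) ^ 2 - 1) with hy
  have hx1 : ∀ s : ℕ, (1 : ℝ) ≤ 1 + z / (s : ℝ) ^ 2 := by
    intro s
    have : (0:ℝ) ≤ z / (s : ℝ) ^ 2 := div_nonneg hz (by positivity)
    linarith
  have hcosh : ∀ s : ℕ, Real.cosh (Real.arsinh (y s)) = 1 + z / (s : ℝ) ^ 2 := by
    intro s
    rw [Real.cosh_arsinh, hy]
    rw [Real.sq_sqrt (by nlinarith [hx1 s])]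
    rw [show 1 + ((1 + z / (s:ℝ)^2)^2 - 1) = (1 + z / (s:ℝ)^2)^2 by ring]
    exact Real.sqrt_sq (by linarith [hx1 s])
  have heval : ∀ s : ℕ, (T ℝ s).eval (1 + z / (s : ℝ) ^ 2)
      = Real.cosh ((s : ℝ) * Real.arsinh (y s)) := by
    intro s
    rw [← hcosh s, T_real_cosh_aux]
    push_cast; ring_nf
  simp only [heval]
  -- main limit: (s : ℝ) * arsinh (y s) → sqrt (2*z)
  have main : Tendsto (fun s : ℕ => (s : ℝ) * Real.arsinh (y s)) atTop
      (nhds (Real.sqrt (2 * z))) := by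
    rcases eq_or_lt_of_le hz with h0 | hzpos
    · have : ∀ s : ℕ, (s : ℝ) * Real.arsinh (y s) = 0 := by
        intro s
        have : y s = 0 := by
          rw [hy]; simp [← h0]
        simp [this, Real.arsinh_zero]
      simp only [this]
      simp [← h0]
    · -- z > 0
      have hys : ∀ s : ℕ, 1 ≤ s → y s = Real.sqrt (z * (2 + z / (s:ℝ)^2)) / s := by
        intro s hs
        have hspos : (0:ℝ) < s := by exact_mod_cast hs
        simp only [hy]
        rw [show (1 + z / (s:ℝ)^2)^2 - 1 = (z * (2 + z / (s:ℝ)^2)) / (s:ℝ)^2 by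
          field_simp; ring]
        rw [Real.sqrt_div (by positivity) ((s:ℝ)^2), Real.sqrt_sq hspos.le]
      -- s * y s → sqrt (2z)
      have hsy : Tendsto (fun s : ℕ => (s : ℝ) * y s) atTop (nhds (Real.sqrt (2 * z))) := by
        have h1 : Tendsto (fun s : ℕ => Real.sqrt (z * (2 + z / (s:ℝ)^2))) atTop
            (nhds (Real.sqrt (2 * z))) := by
          have h2 : Tendsto (fun s : ℕ => z * (2 + z / (s:ℝ)^2)) atTop (nhds (z * 2)) := by
            have h3 : Tendsto (fun s : ℕ => z / (s:ℝ)^2) atTop (nhds 0) :=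
              Tendsto.div_atTop tendsto_const_nhds
                ((tendsto_pow_atTop two_ne_zero).comp tendsto_natCast_atTop_atTop)
            have := (tendsto_const_nhds (x := (2:ℝ))).add h3
            simpa using tendsto_const_nhds.mul this
          have := (Real.continuous_sqrt.continuousAt (x := z * 2)).tendsto.comp h2
          simpa [mul_comm, Function.comp_def] using this
        apply h1.congr'
        filter_upwards [eventually_ge_atTop 1] with s hs
        have hspos : (0:ℝ) < s := by exact_mod_cast hs
        rw [hys s hs]
        field_simp
      -- y s → 0 within ≠ 0
      have hy0 : Tendsto y atTop (nhdsWithin 0 {(0:ℝ)}ᶜ) := by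
        apply tendsto_nhdsWithin_of_tendsto_nhds_of_eventually_within
        · have := hsy.div_atTop (tendsto_natCast_atTop_atTop (R := ℝ))
          apply this.congr'
          filter_upwards [eventually_ge_atTop 1] with s hs
          have hspos : (0:ℝ) < s := by exact_mod_cast hs
          field_simp
        · filter_upwards [eventually_ge_atTop 1] with s hs
          have hspos : (0:ℝ) < s := by exact_mod_cast hs
          have : 0 < y s := by
            rw [hys s hs]
            positivity
          exact fun h => absurd h (ne_of_gt this)
      have hslope : Tendsto (fun s : ℕ => slope Real.arsinh 0 (y s)) atTop (nhds 1) := by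
        have := (Real.hasDerivAt_arsinh 0)
        rw [hasDerivAt_iff_tendsto_slope] at this
        have h1 : ((Real.sqrt (1 + 0 ^ 2))⁻¹ : ℝ) = 1 := by norm_num
        exact (h1 ▸ this).comp hy0
      have := hslope.mul hsy
      rw [one_mul] at this
      apply this.congr'
      filter_upwards [eventually_ge_atTop 1] with s hs
      have hspos : (0:ℝ) < s := by exact_mod_cast hs
      have hyne : y s ≠ 0 := by
        rw [hys s hs]; positivity
      rw [slope_def_field, Real.arsinh_zero]
      field_simp
      ring
  exact (Real.continuous_cosh.continuousAt.tendsto).comp main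
end

section
/- For every real z ≥ 0 with z > 0, s^{-1} U_{s-1}(1 + z/s²) converges to sinh(√(2z))/√(2z) as s → ∞. -/
open Polynomial Polynomial.Chebyshev Filter

theorem U_real_cosh (t : ℝ) (n : ℤ) :
    (U ℝ n).eval (Real.cosh t) * Real.sinh t = Real.sinh ((n + 1) * t) := by
  have h := Polynomial.Chebyshev.U_complex_cos ((t : ℂ) * Complex.I) n
  rw [Complex.cos_mul_I, Complex.sin_mul_I] at h
  have h2 : (n + 1 : ℂ) * (t * Complex.I) = ((n + 1) * t : ℂ) * Complex.I := by ring
  rw [h2, Complex.sin_mul_I] at h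
  have h3 : (U ℂ n).eval (Complex.cosh t) * Complex.sinh t = Complex.sinh ((n+1)*t) :=
    mul_right_cancel₀ Complex.I_ne_zero (by linear_combination h)
  rw [← Complex.ofReal_cosh, ← Polynomial.Chebyshev.complex_ofReal_eval_U,
    ← Complex.ofReal_sinh, ← Complex.ofReal_mul,
    show ((n:ℂ)+1)*(t:ℂ) = (((n:ℝ)+1)*t : ℝ) by push_cast; ring, ← Complex.ofReal_sinh] at h3
  exact_mod_cast h3

theorem chebyshev_U_limit_sinh (z : ℝ) (hz : 0 < z) :
    Tendsto (fun s : ℕ => ((s : ℝ))⁻¹ * (U ℝ ((s : ℤ) - 1)).eval (1 + z / (s : ℝ) ^ 2)) atTop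
      (nhds (Real.sinh (Real.sqrt (2 * z)) / Real.sqrt (2 * z))) := by
  set w : ℕ → ℝ := fun s => Real.sqrt ((1 + z / (s:ℝ)^2)^2 - 1) with hw
  have hs2 : ∀ {s : ℕ}, 1 ≤ s → (0:ℝ) < (s:ℝ)^2 := by
    intro s hs
    positivity
  have hwpos : ∀ {s : ℕ}, 1 ≤ s → 0 < w s := by
    intro s hs
    apply Real.sqrt_pos.2
    nlinarith [hs2 hs, div_pos hz (hs2 hs)]
  -- limit of s * w s
  have hsq : Tendsto (fun s : ℕ => (s:ℝ)^2) atTop atTop :=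
    (tendsto_pow_atTop two_ne_zero).comp tendsto_natCast_atTop_atTop
  have hzz : Tendsto (fun s : ℕ => 2*z + z^2/(s:ℝ)^2) atTop (nhds (2*z)) := by
    have := tendsto_const_nhds (x := (2*z : ℝ)) (f := atTop (α := ℕ))
    simpa using this.add (tendsto_const_nhds.div_atTop hsq)
  have hg : Tendsto (fun s : ℕ => (s:ℝ) * w s) atTop (nhds (Real.sqrt (2*z))) := by
    have h1 : Tendsto (fun s : ℕ => Real.sqrt (2*z + z^2/(s:ℝ)^2)) atTop
        (nhds (Real.sqrt (2*z))) := (Real.continuous_sqrt.tendsto _).comp hzz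
    apply h1.congr'
    filter_upwards [eventually_ge_atTop 1] with s hs
    have h2 := hs2 hs
    rw [hw]
    rw [← Real.sqrt_sq (le_of_lt (by positivity : (0:ℝ) < (s:ℝ))), ← Real.sqrt_mul (by positivity)]
    congr 1
    field_simp
    rw [Real.sq_sqrt h2.le]
    ring
  -- w tends to 0 within ≠ 0
  have hw0 : Tendsto w atTop (nhdsWithin 0 {x : ℝ | x ≠ 0}) := by
    rw [tendsto_nhdsWithin_iff]
    constructor
    · have : Tendsto (fun s : ℕ => (1 + z / (s:ℝ)^2)^2 - 1) atTop (nhds 0) := by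
        have hd : Tendsto (fun s : ℕ => z/(s:ℝ)^2) atTop (nhds 0) :=
          tendsto_const_nhds.div_atTop hsq
        have := ((tendsto_const_nhds (x := (1:ℝ))).add hd).pow 2
        simpa using this.sub (tendsto_const_nhds (x := (1:ℝ)))
      have := (Real.continuous_sqrt.tendsto 0).comp this
      simpa [hw, Function.comp_def] using this
    · filter_upwards [eventually_ge_atTop 1] with s hs
      exact ne_of_gt (hwpos hs)
  -- slope of arsinh at 0
  have hslope : Tendsto (fun y : ℝ => Real.arsinh y / y) (nhdsWithin 0 {x : ℝ | x ≠ 0}) (nhds 1) := by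
    have h := (Real.hasDerivAt_arsinh 0)
    rw [hasDerivAt_iff_tendsto_slope] at h
    have h2 : (Real.sqrt (1 + (0:ℝ)^2))⁻¹ = 1 := by simp
    rw [h2] at h
    apply h.congr
    intro y
    simp [slope_def_field, div_eq_mul_inv, mul_comm]
  have hratio : Tendsto (fun s : ℕ => Real.arsinh (w s) / w s) atTop (nhds 1) :=
    hslope.comp hw0
  -- s * arsinh (w s) → sqrt (2z)
  have hst : Tendsto (fun s : ℕ => (s:ℝ) * Real.arsinh (w s)) atTop (nhds (Real.sqrt (2*z))) := by
    have := hg.mul hratio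
    rw [mul_one] at this
    apply this.congr'
    filter_upwards [eventually_ge_atTop 1] with s hs
    have := ne_of_gt (hwpos hs)
    field_simp
  have hnum : Tendsto (fun s : ℕ => Real.sinh ((s:ℝ) * Real.arsinh (w s))) atTop
      (nhds (Real.sinh (Real.sqrt (2*z)))) := (Real.continuous_sinh.tendsto _).comp hst
  have hden_ne : Real.sqrt (2*z) ≠ 0 := ne_of_gt (Real.sqrt_pos.2 (by linarith))
  have := hnum.div hg hden_ne
  apply this.congr'
  filter_upwards [eventually_ge_atTop 1] with s hs
  have hwp := hwpos hs
  have hwne := ne_of_gt hwp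
  have hsne : (s:ℝ) ≠ 0 := by positivity
  -- rewrite 1 + z/s^2 as cosh (arsinh (w s))
  have hx : 1 + z / (s:ℝ)^2 = Real.cosh (Real.arsinh (w s)) := by
    rw [Real.cosh_arsinh, hw]
    rw [Real.sq_sqrt (by nlinarith [hs2 hs, div_pos hz (hs2 hs)] : (0:ℝ) ≤ (1 + z/(s:ℝ)^2)^2 - 1)]
    rw [show 1 + ((1 + z/(s:ℝ)^2)^2 - 1) = (1 + z/(s:ℝ)^2)^2 by ring]
    rw [Real.sqrt_sq (by positivity)]
  have hU := _root_.U_real_cosh (Real.arsinh (w s)) ((s:ℤ) - 1)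
  rw [Real.sinh_arsinh] at hU
  push_cast at hU
  rw [show ((s:ℝ) - 1 + 1) = (s:ℝ) by ring] at hU
  rw [← hx] at hU
  simp only [Pi.div_apply]
  rw [← hU]
  field_simp
end

section
/- For every real t with 0 < t ≤ √2, the squared sinc function satisfies (sin t / t)² ≤ 1 - t²/3 + (2/45) t⁴. -/
open Real

private lemma aux_nonneg (f f' : ℝ → ℝ) (hf : ∀ x, HasDerivAt f (f' x) x)
    (h0 : f 0 = 0) (hd : ∀ x, 0 ≤ x → 0 ≤ f' x) {x : ℝ} (hx : 0 ≤ x) : 0 ≤ f x := by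
  have mono : MonotoneOn f (Set.Ici 0) := by
    apply monotoneOn_of_deriv_nonneg (convex_Ici 0)
      (fun y _ => (hf y).continuousAt.continuousWithinAt)
      (fun y _ => (hf y).differentiableAt.differentiableWithinAt)
    intro y hy
    rw [interior_Ici] at hy
    rw [(hf y).deriv]
    exact hd y hy.le
  calc 0 = f 0 := h0.symm
  _ ≤ f x := mono (Set.self_mem_Ici) hx hx

private lemma sin_ge_taylor {x : ℝ} (hx : 0 ≤ x) : x - x ^ 3 / 6 ≤ Real.sin x := by
  have h := aux_nonneg (fun x => Real.sin x - x + x ^ 3 / 6)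
    (fun x => Real.cos x - 1 + x ^ 2 / 2)
    (fun x => by
      have : HasDerivAt (fun x : ℝ => Real.sin x - x + x ^ 3 / 6)
          (Real.cos x - 1 + 3 * x ^ 2 / 6) x := by
        have := ((Real.hasDerivAt_sin x).sub (hasDerivAt_id x)).add
          (((hasDerivAt_pow 3 x)).div_const 6)
        simp only [Pi.sub_def, Pi.add_def] at this
        simpa using this
      convert this using 1; ring)
    (by norm_num)
    (fun y hy => by nlinarith [Real.one_sub_sq_div_two_le_cos (x := y)]) hx
  linarith

private lemma cos_le_taylor {x : ℝ} (hx : 0 ≤ x) : Real.cos x ≤ 1 - x ^ 2 / 2 + x ^ 4 / 24 := by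
  have h := aux_nonneg (fun x => 1 - x ^ 2 / 2 + x ^ 4 / 24 - Real.cos x)
    (fun x => -x + x ^ 3 / 6 + Real.sin x)
    (fun x => by
      have : HasDerivAt (fun x : ℝ => 1 - x ^ 2 / 2 + x ^ 4 / 24 - Real.cos x)
          (0 - 2 * x / 2 + 4 * x ^ 3 / 24 - (-Real.sin x)) x := by
        have := (((hasDerivAt_const x (1:ℝ)).sub ((hasDerivAt_pow 2 x).div_const 2)).add
          ((hasDerivAt_pow 4 x).div_const 24)).sub (Real.hasDerivAt_cos x)
        simp only [Pi.sub_def, Pi.add_def] at this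
        simpa using this
      convert this using 1; ring)
    (by norm_num)
    (fun y hy => by nlinarith [sin_ge_taylor hy]) hx
  linarith

private lemma sin_le_taylor {x : ℝ} (hx : 0 ≤ x) :
    Real.sin x ≤ x - x ^ 3 / 6 + x ^ 5 / 120 := by
  have h := aux_nonneg (fun x => x - x ^ 3 / 6 + x ^ 5 / 120 - Real.sin x)
    (fun x => 1 - x ^ 2 / 2 + x ^ 4 / 24 - Real.cos x)
    (fun x => by
      have : HasDerivAt (fun x : ℝ => x - x ^ 3 / 6 + x ^ 5 / 120 - Real.sin x)
          (1 - 3 * x ^ 2 / 6 + 5 * x ^ 4 / 120 - Real.cos x) x := by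
        have := (((hasDerivAt_id x).sub ((hasDerivAt_pow 3 x).div_const 6)).add
          ((hasDerivAt_pow 5 x).div_const 120)).sub (Real.hasDerivAt_sin x)
        simp only [Pi.sub_def, Pi.add_def] at this
        simpa using this
      convert this using 1; ring)
    (by norm_num)
    (fun y hy => by nlinarith [cos_le_taylor hy]) hx
  linarith

private lemma cos_ge_taylor {x : ℝ} (hx : 0 ≤ x) :
    1 - x ^ 2 / 2 + x ^ 4 / 24 - x ^ 6 / 720 ≤ Real.cos x := by
  have h := aux_nonneg (fun x => Real.cos x - (1 - x ^ 2 / 2 + x ^ 4 / 24 - x ^ 6 / 720))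
    (fun x => -Real.sin x + (x - x ^ 3 / 6 + x ^ 5 / 120))
    (fun x => by
      have : HasDerivAt (fun x : ℝ => Real.cos x - (1 - x ^ 2 / 2 + x ^ 4 / 24 - x ^ 6 / 720))
          (-Real.sin x - (0 - 2 * x / 2 + 4 * x ^ 3 / 24 - 6 * x ^ 5 / 720)) x := by
        have := (Real.hasDerivAt_cos x).sub
          ((((hasDerivAt_const x (1:ℝ)).sub ((hasDerivAt_pow 2 x).div_const 2)).add
          ((hasDerivAt_pow 4 x).div_const 24)).sub ((hasDerivAt_pow 6 x).div_const 720))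
        simp only [Pi.sub_def, Pi.add_def] at this
        simpa using this
      convert this using 1; ring)
    (by norm_num)
    (fun y hy => by nlinarith [sin_le_taylor hy]) hx
  linarith

theorem sinc_sq_bound (t : ℝ) (ht0 : 0 < t) (ht : t ≤ Real.sqrt 2) :
    (Real.sin t / t) ^ 2 ≤ 1 - t ^ 2 / 3 + 2 / 45 * t ^ 4 := by
  have h2t : (0:ℝ) ≤ 2 * t := by linarith
  have hc := cos_ge_taylor h2t
  have hsq : Real.sin t ^ 2 = 1 / 2 - Real.cos (2 * t) / 2 := by
    rw [Real.cos_two_mul]; nlinarith [Real.sin_sq_add_cos_sq t]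
  have hs : Real.sin t ^ 2 ≤ t ^ 2 - t ^ 4 / 3 + 2 / 45 * t ^ 6 := by
    rw [hsq]; nlinarith
  rw [div_pow]
  rw [div_le_iff₀ (by positivity : (0:ℝ) < t ^ 2)]
  nlinarith
end
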